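/- If an infinite connected graph G with bounded degree has exactly one end and admits a sequence of pairwise disjoint finite cut-sets of uniformly bounded size separating a fixed root from infinity, then p_c(G) = 1 for Bernoulli site percolation. -/

import Mathlib

/-!
Since the cut-sets are disjoint, the events "every vertex of `C n` is closed" are independent,
each of probability at least `(1 - p) ^ K > 0`; by the second Borel–Cantelli lemma almost surely
infinitely many of them occur. On the other hand, if some open cluster is infinite, open up a
finite path from `o` to it: Kőnig's lemma gives a ray from `o` that is open except on that path.
The path meets only finitely many of the disjoint cut-sets, and the ray crosses each of the
others at a vertex that is genuinely open.
-/

open MeasureTheory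

/-- The subgraph of `G` spanned by open vertices in configuration `ω`. -/
def percSubgraph {V : Type*} (G : SimpleGraph V) (ω : V → Bool) : SimpleGraph V where
  Adj a b := G.Adj a b ∧ ω a = true ∧ ω b = true
  symm := ⟨fun a b ⟨h, ha, hb⟩ => ⟨h.symm, hb, ha⟩⟩
  loopless := ⟨fun a ⟨h, _, _⟩ => G.ne_of_adj h rfl⟩

/-- The open cluster of `v`: vertices reachable from `v` in the open subgraph
(empty if `v` is closed). -/
def openCluster {V : Type*} (G : SimpleGraph V) (ω : V → Bool) (v : V) : Set V :=
  {w | ω v = true ∧ (percSubgraph G ω).Reachable v w}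

/-- `μ` is Bernoulli(p) site percolation: cylinder events have product probabilities. -/
def IsBernoulli {V : Type*} (μ : Measure (V → Bool)) (p : ℝ) : Prop :=
  ∀ (S : Finset V) (g : V → Bool),
    μ {ω | ∀ v ∈ S, ω v = g v} = ∏ v ∈ S, ENNReal.ofReal (if g v = true then p else 1 - p)

/-- Vertices of the canopy tree: at level `n`, the binary tree of depth `n`
(vertices = binary strings of length ≤ n) attached at the ray vertex `⟨n, []⟩`. -/
abbrev CanopyV : Type := Σ n : ℕ, {l : List Bool // l.length ≤ n}

/-- The canopy tree: the infinite ray `v_n = ⟨n, []⟩`, with a complete binary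
tree of depth `n` rooted at `v_n`. -/
def canopyTree : SimpleGraph CanopyV where
  Adj a b :=
    (a.1 = b.1 ∧ ∃ x, b.2.val = a.2.val ++ [x] ∨ a.2.val = b.2.val ++ [x])
    ∨ (a.2.val = [] ∧ b.2.val = [] ∧ (a.1 = b.1 + 1 ∨ b.1 = a.1 + 1))
  symm := by
    constructor
    rintro a b (⟨h1, x, h2⟩ | ⟨h1, h2, h3⟩)
    · exact Or.inl ⟨h1.symm, x, h2.symm⟩
    · exact Or.inr ⟨h2, h1, h3.symm⟩
  loopless := by
    constructor
    rintro a (⟨_, x, h | h⟩ | ⟨_, _, h | h⟩) <;> first | simp at h | omega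

/-- The Cartesian product of a graph with the bi-infinite line `ℤ`. -/
def prodZ {V : Type*} (G : SimpleGraph V) : SimpleGraph (V × ℤ) where
  Adj a b := (a.1 = b.1 ∧ (a.2 = b.2 + 1 ∨ b.2 = a.2 + 1)) ∨ (G.Adj a.1 b.1 ∧ a.2 = b.2)
  symm := by
    constructor
    rintro a b (⟨h1, h2⟩ | ⟨h1, h2⟩)
    · exact Or.inl ⟨h1.symm, h2.symm⟩
    · exact Or.inr ⟨h1.symm, h2.symm⟩
  loopless := by
    constructor
    rintro a (⟨_, h | h⟩ | ⟨h, _⟩)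
    · omega
    · omega
    · exact G.ne_of_adj h rfl

namespace SimpleGraph

variable {V : Type*} {H : SimpleGraph V}

def IsRayFrom (H : SimpleGraph V) (v : V) (f : ℕ → V) : Prop :=
  Function.Injective f ∧ f 0 = v ∧ ∀ k, H.Adj (f k) (f (k + 1))

lemma IsRayFrom.mono {H' : SimpleGraph V} (hH : H ≤ H') {v : V} {f : ℕ → V}
    (hf : H.IsRayFrom v f) : H'.IsRayFrom v f :=
  ⟨hf.1, hf.2.1, fun k => hH (hf.2.2 k)⟩

def walkSeqs (H : SimpleGraph V) (v : V) (n : ℕ) : Set (Fin (n + 1) → V) :=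
  {f | f 0 = v ∧ ∀ k : Fin n, H.Adj (f k.castSucc) (f k.succ)}

lemma restrict_mem_walkSeqs {v : V} {m n : ℕ} (hmn : m ≤ n) {f : Fin (n + 1) → V}
    (hf : f ∈ H.walkSeqs v n) : f ∘ Fin.castLE (Nat.succ_le_succ hmn) ∈ H.walkSeqs v m :=
  ⟨hf.1, fun k => hf.2 (k.castLE hmn)⟩

lemma Walk.getVert_mem_walkSeqs {v w : V} (P : H.Walk v w) {n : ℕ} (hn : n ≤ P.length) :
    (fun k : Fin (n + 1) => P.getVert k) ∈ H.walkSeqs v n :=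
  ⟨P.getVert_zero, fun k => P.adj_getVert_succ (by simp only [Fin.val_castSucc]; omega)⟩

lemma finite_walkSeqs (hlf : ∀ w, (H.neighborSet w).Finite) (v : V) (n : ℕ) :
    (H.walkSeqs v n).Finite := by
  induction n with
  | zero =>
    refine (Set.finite_singleton fun _ => v).subset fun f hf => ?_
    exact funext fun k => (Fin.fin_one_eq_zero k ▸ hf.1 : f k = v)
  | succ n ih =>
    have hlast : (⋃ g ∈ H.walkSeqs v n, H.neighborSet (g (Fin.last n))).Finite :=
      ih.biUnion fun g _ => hlf _
    refine ((ih.prod hlast).image fun gw => Fin.snoc gw.1 gw.2).subset fun f hf => ?_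
    have hinit : Fin.init f ∈ H.walkSeqs v n := restrict_mem_walkSeqs n.le_succ hf
    exact ⟨(Fin.init f, f (Fin.last _)),
      ⟨hinit, Set.mem_biUnion hinit (hf.2 (Fin.last n))⟩, Fin.snoc_init_self f⟩

/-- In a locally finite graph only finitely many vertices are within distance `n` of `v`, so
an infinite component contains paths of every length. -/
lemma exists_injective_mem_walkSeqs (hlf : ∀ w, (H.neighborSet w).Finite) {v : V}
    (hinf : {w | H.Reachable v w}.Infinite) (n : ℕ) :
    ∃ f ∈ H.walkSeqs v n, Function.Injective f := by
  classical
  have hball : (⋃ m ∈ Finset.range n,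
      (fun f : Fin (m + 1) → V => f (Fin.last m)) '' H.walkSeqs v m).Finite :=
    (Finset.range n).finite_toSet.biUnion fun m _ => (finite_walkSeqs hlf v m).image _
  obtain ⟨w, ⟨P⟩, hw⟩ := (hinf.sdiff hball).nonempty
  obtain ⟨Q, hQ⟩ := P.toPath
  have hlen : n ≤ Q.length := by
    by_contra! hlt
    refine hw (Set.mem_biUnion (Finset.mem_range.2 hlt) ⟨_, Q.getVert_mem_walkSeqs le_rfl, ?_⟩)
    exact Q.getVert_length
  refine ⟨_, Q.getVert_mem_walkSeqs hlen, fun i j hij => Fin.ext ?_⟩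
  exact hQ.getVert_injOn (by simp; omega) (by simp; omega) hij

/-- Kőnig's lemma, applied to the finitely branching inverse system of injective walks of each
length. -/
theorem exists_isRayFrom (hlf : ∀ w, (H.neighborSet w).Finite) {v : V}
    (hinf : {w | H.Reachable v w}.Infinite) : ∃ f, H.IsRayFrom v f := by
  let α n := {f : Fin (n + 1) → V // f ∈ H.walkSeqs v n ∧ Function.Injective f}
  let π {m n : ℕ} (hmn : m ≤ n) (f : α n) : α m :=
    ⟨f.1 ∘ Fin.castLE (Nat.succ_le_succ hmn), restrict_mem_walkSeqs hmn f.2.1,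
      f.2.2.comp (Fin.castLE_injective _)⟩
  have hfin n : Finite (α n) := ((finite_walkSeqs hlf v n).subset fun f hf => hf.1).to_subtype
  have hne n : Nonempty (α n) :=
    let ⟨f, hf, hinj⟩ := exists_injective_mem_walkSeqs hlf hinf n; ⟨⟨f, hf, hinj⟩⟩
  obtain ⟨g, hg⟩ := exists_seq_forall_proj_of_forall_finite π (fun _ _ => rfl)
    (fun _ _ _ _ _ _ => rfl) fun i _ => Set.toFinite _
  have hcompat {m n : ℕ} (hmn : m ≤ n) (k : Fin (m + 1)) :
      (g n).1 (k.castLE (Nat.succ_le_succ hmn)) = (g m).1 k := by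
    rw [← hg hmn]; rfl
  have hinj {m n : ℕ} (hmn : m ≤ n) (h : (g m).1 (Fin.last m) = (g n).1 (Fin.last n)) :
      m = n := by
    rw [← hcompat hmn] at h
    simpa using congrArg Fin.val ((g n).2.2 h)
  refine ⟨fun n => (g n).1 (Fin.last n), fun m n h => ?_, (g 0).2.1.1, fun n => ?_⟩
  · rcases le_total m n with hmn | hnm
    exacts [hinj hmn h, (hinj hnm h.symm).symm]
  · dsimp only
    rw [← hcompat n.le_succ]
    exact (g (n + 1)).2.1.2 (Fin.last n)

end SimpleGraph

section Percolation

open SimpleGraph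

variable {V : Type*} {G : SimpleGraph V}

lemma percSubgraph_adj {ω : V → Bool} {a b : V} :
    (percSubgraph G ω).Adj a b ↔ G.Adj a b ∧ ω a = true ∧ ω b = true :=
  Iff.rfl

lemma percSubgraph_le (ω : V → Bool) : percSubgraph G ω ≤ G := fun _ _ h => h.1

lemma percSubgraph_mono {ω ω' : V → Bool} (h : ∀ v, ω v = true → ω' v = true) :
    percSubgraph G ω ≤ percSubgraph G ω' :=
  fun _ _ ⟨hadj, ha, hb⟩ => percSubgraph_adj.2 ⟨hadj, h _ ha, h _ hb⟩

lemma SimpleGraph.Walk.reachable_percSubgraph {ω : V → Bool} {u w : V} (P : G.Walk u w)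
    (hP : ∀ x ∈ P.support, ω x = true) : (percSubgraph G ω).Reachable u w := by
  induction P with
  | nil => rfl
  | cons hadj Q ih =>
    simp only [Walk.support_cons, List.mem_cons, forall_eq_or_imp] at hP
    exact (percSubgraph_adj.2 ⟨hadj, hP.1, hP.2 _ Q.start_mem_support⟩).reachable.trans
      (ih hP.2)

def SeparatesFromInfinity (G : SimpleGraph V) (o : V) (A : Set V) : Prop :=
  ∀ f, G.IsRayFrom o f → ∃ k, f k ∈ A

/-- Opening the finitely many vertices of a path from `o` to an infinite open cluster yields an
infinite open cluster at `o`, hence, by Kőnig's lemma, an open ray from `o`. Off that path the ray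
uses only vertices that were open to begin with. -/
theorem exists_finset_forall_separatesFromInfinity_exists_open (hconn : G.Connected)
    (hfin : ∀ v, (G.neighborSet v).Finite) (o : V) {ω : V → Bool} {v : V}
    (hv : (openCluster G ω v).Infinite) :
    ∃ S : Finset V, ∀ A, SeparatesFromInfinity G o A → Disjoint (S : Set V) A →
      ∃ x ∈ A, ω x = true := by
  classical
  obtain ⟨P⟩ := hconn.preconnected o v
  let S := P.support.toFinset
  let ω' : V → Bool := fun x => ω x || decide (x ∈ S)
  have hle : percSubgraph G ω ≤ percSubgraph G ω' :=
    percSubgraph_mono fun x hx => by simp [ω', hx]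
  have hov : (percSubgraph G ω').Reachable o v :=
    P.reachable_percSubgraph fun x hx => by simp [ω', S, hx]
  have hinf : {w | (percSubgraph G ω').Reachable o w}.Infinite :=
    hv.mono fun w hw => hov.trans (hw.2.mono hle)
  obtain ⟨f, hf⟩ := exists_isRayFrom
    (fun w => (hfin w).subset (neighborSet_mono (percSubgraph_le ω') w)) hinf
  refine ⟨S, fun A hA hSA => ?_⟩
  obtain ⟨k, hk⟩ := hA f (hf.mono (percSubgraph_le ω'))
  have hopen : ω' (f k) = true := (hf.2.2 k).2.1
  have hkS : f k ∉ S := fun h => Set.disjoint_left.1 hSA h hk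
  exact ⟨f k, hk, by simpa [ω', hkS] using hopen⟩

end Percolation

section Bernoulli

open MeasureTheory ProbabilityTheory Filter

variable {V : Type*}

def allClosed (S : Finset V) : Set (V → Bool) := {ω | ∀ v ∈ S, ω v = false}

lemma measurableSet_allClosed (S : Finset V) : MeasurableSet (allClosed S) := by
  simp only [allClosed, Set.ofPred_forall]
  exact S.measurableSet_biInter fun v _ =>
    measurableSet_eq_fun (measurable_pi_apply v) measurable_const

lemma allClosed_biUnion [DecidableEq V] {ι : Type*} (s : Finset ι) (C : ι → Finset V) :
    allClosed (s.biUnion C) = ⋂ i ∈ s, allClosed (C i) := by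
  ext ω
  simp only [allClosed, Finset.mem_biUnion, Set.mem_ofPred_eq, Set.mem_iInter]
  grind

variable {μ : Measure (V → Bool)} {p : ℝ}

lemma IsBernoulli.measure_allClosed (hμ : IsBernoulli μ p) (S : Finset V) :
    μ (allClosed S) = ENNReal.ofReal (1 - p) ^ S.card := by
  simpa [allClosed] using hμ S fun _ => false

lemma IsBernoulli.iIndepSet_allClosed (hμ : IsBernoulli μ p)
    {ι : Type*} {C : ι → Finset V} (hC : Pairwise fun m n => Disjoint (C m) (C n)) :
    iIndepSet (fun i => allClosed (C i)) μ := by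
  classical
  refine (iIndepSet_iff_meas_biInter fun i => measurableSet_allClosed _).2 fun s => ?_
  rw [← allClosed_biUnion, hμ.measure_allClosed, Finset.card_biUnion fun i _ j _ hij => hC hij]
  simp only [hμ.measure_allClosed, Finset.prod_pow_eq_pow_sum]

/-- Second Borel–Cantelli lemma: the events are independent with probabilities at least
`min (1 - p) 1 ^ K > 0` (the `min` because `ENNReal.ofReal (1 - p)` exceeds `1` when `p < 0`). -/
theorem IsBernoulli.ae_frequently_allClosed (hμ : IsBernoulli μ p)
    (hp : p < 1) {C : ℕ → Finset V} (hC : Pairwise fun m n => Disjoint (C m) (C n)) {K : ℕ}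
    (hK : ∀ n, (C n).card ≤ K) :
    ∀ᵐ ω ∂μ, ∃ᶠ n in atTop, ω ∈ allClosed (C n) := by
  set c := ENNReal.ofReal (1 - p)
  have hc : min c 1 ^ K ≠ 0 := pow_ne_zero _ (by simp [c, hp])
  have hlow n : min c 1 ^ K ≤ μ (allClosed (C n)) := calc
    min c 1 ^ K ≤ min c 1 ^ (C n).card := pow_le_pow_of_le_one zero_le (min_le_right _ _) (hK n)
    _ ≤ c ^ (C n).card := pow_le_pow_left₀ zero_le (min_le_left _ _) _
    _ = μ (allClosed (C n)) := (hμ.measure_allClosed _).symm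
  have hsum : ∑' n, μ (allClosed (C n)) = ⊤ :=
    top_le_iff.1 <| (ENNReal.tsum_const_eq_top_of_ne_zero hc).symm.le.trans
      (ENNReal.tsum_le_tsum hlow)
  have hindep := hμ.iIndepSet_allClosed hC
  have := hindep.isProbabilityMeasure
  have hlimsup : μ (limsup (fun n => allClosed (C n)) atTop) = μ Set.univ := by
    rw [measure_univ]
    exact measure_limsup_eq_one (fun n => measurableSet_allClosed _) hindep hsum
  have hmeas := MeasurableSet.measurableSet_limsup fun n => measurableSet_allClosed (C n)
  filter_upwards [(ae_mem_iff_measure_eq hmeas.nullMeasurableSet).2 hlimsup] with ω hω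
  exact mem_limsup_iff_frequently_mem.1 hω

end Bernoulli

lemma Finset.eventually_cofinite_disjoint {α ι : Type*} {C : ι → Finset α}
    (hC : Pairwise fun m n => Disjoint (C m) (C n)) (S : Finset α) :
    ∀ᶠ n in Filter.cofinite, Disjoint S (C n) := by
  have hsub : {n | ¬Disjoint S (C n)} ⊆ ⋃ x ∈ (S : Set α), {n | x ∈ C n} := fun n hn => by
    obtain ⟨x, hxS, hxC⟩ := Finset.not_disjoint_iff.1 hn
    exact Set.mem_biUnion hxS hxC
  have hunique (x : α) : {n | x ∈ C n}.Subsingleton := fun m hm n hn => by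
    by_contra hmn
    exact Finset.disjoint_left.1 (hC hmn) hm hn
  exact Filter.eventually_cofinite.2 <|
    (S.finite_toSet.biUnion fun x _ => (hunique x).finite).subset hsub

theorem pc_eq_one_of_one_end_bounded_cutsets_general {V : Type*}
    (G : SimpleGraph V) (hconn : G.Connected)
    (hfin : ∀ v, (G.neighborSet v).Finite)
    (o : V) (C : ℕ → Finset V) (hdisj : Pairwise fun m n => Disjoint (C m) (C n))
    (K : ℕ) (hK : ∀ n, (C n).card ≤ K)
    (hcut : ∀ n, ∀ f : ℕ → V, Function.Injective f → f 0 = o →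
      (∀ k, G.Adj (f k) (f (k + 1))) → ∃ k, f k ∈ C n)
    (p : ℝ) (hp : p < 1)
    (μ : Measure (V → Bool)) (hμ : IsBernoulli μ p) :
    μ {ω | ∃ v, (openCluster G ω v).Infinite} = 0 := by
  refine measure_mono_null ?_ (ae_iff.1 (hμ.ae_frequently_allClosed hp hdisj hK))
  rintro ω ⟨v, hv⟩ hclosed
  obtain ⟨S, hS⟩ := exists_finset_forall_separatesFromInfinity_exists_open hconn hfin o hv
  have hfar := Nat.cofinite_eq_atTop ▸ Finset.eventually_cofinite_disjoint hdisj S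
  obtain ⟨n, hn, hSn⟩ := (hclosed.and_eventually hfar).exists
  obtain ⟨x, hx, hxopen⟩ := hS (C n) (fun f hf => hcut n f hf.1 hf.2.1 hf.2.2)
    (Finset.disjoint_coe.2 hSn)
  simp [hn x hx] at hxopen

/-- an infinite connected bounded-degree graph with exactly one end and a
sequence of pairwise disjoint finite cut-sets of uniformly bounded size separating a root
from infinity has `p_c = 1`. -/
theorem pc_eq_one_of_one_end_bounded_cutsets {V : Type*}
    (G : SimpleGraph V) (hinf : Infinite V) (hconn : G.Connected)
    (D : ℕ) (hfin : ∀ v, (G.neighborSet v).Finite) (hdeg : ∀ v, (G.neighborSet v).ncard ≤ D)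
    (hend : Nonempty G.end ∧ Subsingleton G.end)
    (o : V) (C : ℕ → Finset V) (hdisj : Pairwise fun m n => Disjoint (C m) (C n))
    (K : ℕ) (hK : ∀ n, (C n).card ≤ K)
    (hcut : ∀ n, ∀ f : ℕ → V, Function.Injective f → f 0 = o →
      (∀ k, G.Adj (f k) (f (k + 1))) → ∃ k, f k ∈ C n)
    (p : ℝ) (hp : p < 1)
    (μ : Measure (V → Bool)) [IsProbabilityMeasure μ] (hμ : IsBernoulli μ p) :
    μ {ω | ∃ v, (openCluster G ω v).Infinite} = 0 :=
  pc_eq_one_of_one_end_bounded_cutsets_general G hconn hfin o C hdisj K hK hcut p hp μ hμ
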